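/- arXiv:2209.00537 — 2 statements merged into one kernel-verified Lean document; each statement's English description precedes it below -/
import Mathlib

section
/- Let C be a triangulated category, X, Y, Z full subcategories, and let X*Y denote the class of objects E fitting into a distinguished triangle X → E → Y → X[1] with X ∈ X, Y ∈ Y. Then the operation * is associative: (X*Y)*Z = X*(Y*Z). -/
open CategoryTheory Limits Pretriangulated

/-- For full subcategories (given by classes of objects) `S`, `T` of a triangulated category,
`S * T` is the class of objects `E` fitting into a distinguished triangle
`X → E → Y → X⟦1⟧` with `X ∈ S` and `Y ∈ T`. -/
def triStar {C : Type} [Category C] [HasZeroObject C] [HasShift C ℤ] [Preadditive C]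
    [∀ n : ℤ, (shiftFunctor C n).Additive] [Pretriangulated C]
    (S T : Set C) : Set C :=
  {E | ∃ (X Y : C) (f : X ⟶ E) (g : E ⟶ Y) (h : Y ⟶ X⟦(1 : ℤ)⟧),
    (Triangle.mk f g h ∈ distTriang C) ∧ X ∈ S ∧ Y ∈ T}

/-!
Both inclusions are instances of the octahedral axiom. Given `X → A → Y` and `A → E → Z`,
the octahedron on `X → A → E` puts the cone of `X → E` in `T * U`. Given `X → E → A` and
`Y → A → Z`, the dual octahedron on `E → A → Z` puts the cocone of `E → Z` in `S * T`.
-/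

section

variable {C : Type} [Category C] [HasZeroObject C] [HasShift C ℤ] [Preadditive C]
  [∀ n : ℤ, (shiftFunctor C n).Additive] [Pretriangulated C] [IsTriangulated C]

theorem triStar_assoc_subset (S T U : Set C) :
    triStar (triStar S T) U ⊆ triStar S (triStar T U) := by
  rintro E ⟨A, Z, f, g, h, hE, ⟨X, Y, a, b, _, hA, hX, hY⟩, hZ⟩
  obtain ⟨W, v, w, hW⟩ := distinguished_cocone_triangle (a ≫ f)
  have O := Triangulated.someOctahedron rfl hA hE hW
  exact ⟨X, W, a ≫ f, v, w, hW, hX, Y, Z, O.m₁, O.m₃, h ≫ b⟦(1 : ℤ)⟧', O.mem, hY, hZ⟩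

theorem triStar_assoc_supset (S T U : Set C) :
    triStar S (triStar T U) ⊆ triStar (triStar S T) U := by
  rintro E ⟨X, A, f, g, h, hE, hX, ⟨Y, Z, a, b, _, hA, hY, hZ⟩⟩
  obtain ⟨B, i, d, hB⟩ := distinguished_cocone_triangle₁ (g ≫ b)
  have O := Triangulated.someOctahedron' rfl hE hA hB
  exact ⟨B, Z, i, g ≫ b, d, hB, ⟨X, Y, O.m₁, O.m₃, a ≫ h, O.mem, hX, hY⟩, hZ⟩

end

/-- In a triangulated category, the operation `*` on classes of objects is associative. -/
theorem stmt5 (C : Type) [Category C] [HasZeroObject C] [HasShift C ℤ] [Preadditive C]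
    [∀ n : ℤ, (shiftFunctor C n).Additive] [Pretriangulated C] [IsTriangulated C]
    (S T U : Set C) :
    triStar (triStar S T) U = triStar S (triStar T U) :=
  (triStar_assoc_subset S T U).antisymm (triStar_assoc_supset S T U)
end

section
/- Let C be a triangulated category, Q: C → C/N a Verdier quotient functor, and Y an object of C. Define U_Y to be the class of objects X such that the induced map Hom_C(X, Y[i]) → Hom_{C/N}(Q(X), Q(Y)[i]) is bijective for all i ≤ 0 and injective for i = 1. Then U_Y is closed under extensions: if X1 → E → X2 → X1[1] is a distinguished triangle with X1, X2 ∈ U_Y, then E ∈ U_Y. -/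
open CategoryTheory Limits Pretriangulated

namespace CategoryTheory.Triangulated

/-- The structure `Triangulated.Subcategory` of Mathlib (December 2024), restored verbatim. -/
structure Subcategory (C : Type*) [Category C] [HasZeroObject C] [HasShift C ℤ] [Preadditive C]
    [∀ n : ℤ, (shiftFunctor C n).Additive] [Pretriangulated C] where
  P : C → Prop
  zero' : ∃ (Z : C) (_ : IsZero Z), P Z
  shift (X : C) (n : ℤ) : P X → P (X⟦n⟧)
  ext₂' (T : Triangle C) (_ : T ∈ distTriang C) : P T.obj₁ → P T.obj₃ →
    ObjectProperty.isoClosure P T.obj₂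

/-- The class of morphisms whose cone satisfies `S.P` (old `Subcategory.W`). -/
def Subcategory.W {C : Type*} [Category C] [HasZeroObject C] [HasShift C ℤ] [Preadditive C]
    [∀ n : ℤ, (shiftFunctor C n).Additive] [Pretriangulated C] (S : Subcategory C) :
    MorphismProperty C :=
  fun X Y f => ∃ (Z : C) (g : Y ⟶ Z) (h : Z ⟶ X⟦(1 : ℤ)⟧)
    (_ : Triangle.mk f g h ∈ distTriang C), S.P Z

end CategoryTheory.Triangulated

/-!
Apply `Hom(-, Y⟦i⟧)` to the triangle `X₁ → E → X₂ → X₁⟦1⟧`; since `Q` is triangulated it carries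
the resulting long exact sequence to the one of `Hom(Q -, Q(Y⟦i⟧))`, and the four lemma compares
the two. Injectivity at `E` in degree `i ≤ 1` needs injectivity at `X₁`, `X₂` in degree `i` and
surjectivity at `X₁⟦1⟧` in degree `i`, i.e. at `X₁` in degree `i - 1 ≤ 0`. Surjectivity at `E` in
degree `i ≤ 0` needs surjectivity at `X₁`, `X₂` in degree `i` and injectivity at `X₂` in degree
`i + 1 ≤ 1`.
-/

namespace CategoryTheory

section MapOnHoms

variable {C D : Type*} [Category C] [Category D] (F : C ⥤ D)

lemma Functor.map_surjective_of_iso_right {X Z Z' : C} (e : Z ≅ Z')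
    (hF : Function.Surjective (F.map (X := X) (Y := Z))) :
    Function.Surjective (F.map (X := X) (Y := Z')) := by
  intro β
  obtain ⟨a, ha⟩ := hF (β ≫ F.map e.inv)
  exact ⟨a ≫ e.hom, by simp [ha]⟩

lemma Functor.map_injective_of_iso_right {X Z Z' : C} (e : Z ≅ Z')
    (hF : Function.Injective (F.map (X := X) (Y := Z))) :
    Function.Injective (F.map (X := X) (Y := Z')) := by
  intro a b hab
  simpa using congrArg (· ≫ e.hom) (hF (by simp [hab]) : a ≫ e.inv = b ≫ e.inv)

variable {A : Type*} [AddGroup A] [HasShift C A] [HasShift D A] [F.CommShift A]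

lemma Functor.map_surjective_shift {X Z : C} (n : A)
    (hF : Function.Surjective (F.map (X := X) (Y := Z))) :
    Function.Surjective (F.map (X := X⟦n⟧) (Y := Z⟦n⟧)) := by
  intro β
  obtain ⟨c, hc⟩ := (shiftFunctor D n).map_surjective
    ((F.commShiftIso n).inv.app X ≫ β ≫ (F.commShiftIso n).hom.app Z)
  obtain ⟨a, rfl⟩ := hF c
  refine ⟨a⟦n⟧', ?_⟩
  simpa using (F.commShiftIso n).hom.app X ≫= hc =≫ (F.commShiftIso n).inv.app Z

end MapOnHoms

section Triangulated

-- `CategoryTheory.` is needed because inside `Pretriangulated.Triangle` the bare name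
-- `shiftFunctor` resolves to `Triangle.shiftFunctor`.
variable {C : Type*} [Category C] [HasZeroObject C] [HasShift C ℤ] [Preadditive C]
  [∀ n : ℤ, (CategoryTheory.shiftFunctor C n).Additive] [Pretriangulated C]
  {X₁ X₂ X₃ : C} {f : X₁ ⟶ X₂} {g : X₂ ⟶ X₃} {h : X₃ ⟶ X₁⟦(1 : ℤ)⟧}

lemma Pretriangulated.Triangle.yoneda_exact₁ (hT : Triangle.mk f g h ∈ distTriang C) {Z : C}
    (a : X₁ ⟶ Z) (ha : h ≫ a⟦(1 : ℤ)⟧' = 0) :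
    ∃ b : X₂ ⟶ Z, a = f ≫ b := by
  obtain ⟨c, hc⟩ : ∃ c : X₂⟦(1 : ℤ)⟧ ⟶ Z⟦(1 : ℤ)⟧, a⟦(1 : ℤ)⟧' = (-f⟦(1 : ℤ)⟧') ≫ c :=
    Triangle.yoneda_exact₃ _ (rot_of_distTriang _ hT) _ ha
  obtain ⟨c', rfl⟩ := (CategoryTheory.shiftFunctor C (1 : ℤ)).map_surjective c
  refine ⟨-c', (CategoryTheory.shiftFunctor C (1 : ℤ)).map_injective ?_⟩
  simpa using hc

variable {D : Type*} [Category D] [HasZeroObject D] [HasShift D ℤ] [Preadditive D]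
  [∀ n : ℤ, (shiftFunctor D n).Additive] [Pretriangulated D]
  (F : C ⥤ D) [F.CommShift ℤ] [F.IsTriangulated] (Z : C)

lemma Functor.map_injective_obj₂_of_distTriang (hT : Triangle.mk f g h ∈ distTriang C)
    (h₁ : Function.Injective (F.map (X := X₁) (Y := Z)))
    (h₃ : Function.Injective (F.map (X := X₃) (Y := Z)))
    (h₁' : Function.Surjective (F.map (X := X₁⟦(1 : ℤ)⟧) (Y := Z))) :
    Function.Injective (F.map (X := X₂) (Y := Z)) := by
  have hFT : Triangle.mk (F.map f) (F.map g)
      (F.map h ≫ (F.commShiftIso (1 : ℤ)).hom.app X₁) ∈ distTriang D :=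
    F.map_distinguished _ hT
  refine (injective_iff_map_eq_zero F.mapAddHom).2 fun e he => ?_
  change F.map e = 0 at he
  obtain ⟨x, rfl⟩ : ∃ x : X₃ ⟶ Z, e = g ≫ x :=
    Triangle.yoneda_exact₂ _ hT e (h₁ (by simp [he] : F.map (f ≫ e) = F.map 0))
  obtain ⟨u, hu⟩ : ∃ u : (F.obj X₁)⟦(1 : ℤ)⟧ ⟶ F.obj Z,
      F.map x = (F.map h ≫ (F.commShiftIso (1 : ℤ)).hom.app X₁) ≫ u :=
    Triangle.yoneda_exact₃ _ hFT (F.map x) ((F.map_comp g x).symm.trans he)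
  obtain ⟨v, hv⟩ := h₁' ((F.commShiftIso (1 : ℤ)).hom.app X₁ ≫ u)
  have hx : x = h ≫ v := h₃ (by simpa [hv] using hu)
  have hgh : g ≫ h = 0 := comp_distTriang_mor_zero₂₃ _ hT
  simp [hx, reassoc_of% hgh]

lemma Functor.map_surjective_obj₂_of_distTriang (hT : Triangle.mk f g h ∈ distTriang C)
    (h₁ : Function.Surjective (F.map (X := X₁) (Y := Z)))
    (h₃ : Function.Surjective (F.map (X := X₃) (Y := Z)))
    (h₃' : Function.Injective (F.map (X := X₃) (Y := Z⟦(1 : ℤ)⟧))) :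
    Function.Surjective (F.map (X := X₂) (Y := Z)) := by
  have hFT : Triangle.mk (F.map f) (F.map g)
      (F.map h ≫ (F.commShiftIso (1 : ℤ)).hom.app X₁) ∈ distTriang D :=
    F.map_distinguished _ hT
  intro ε
  obtain ⟨a, ha⟩ := h₁ (F.map f ≫ ε)
  have hFa : F.map (h ≫ a⟦(1 : ℤ)⟧') = 0 := by
    have h₃₁ : (F.map h ≫ (F.commShiftIso (1 : ℤ)).hom.app X₁) ≫ (F.map f)⟦(1 : ℤ)⟧' = 0 :=
      comp_distTriang_mor_zero₃₁ _ hFT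
    rw [← cancel_mono ((F.commShiftIso (1 : ℤ)).hom.app Z)]
    simp [ha, reassoc_of% h₃₁]
  obtain ⟨b, rfl⟩ := Triangle.yoneda_exact₁ hT a (h₃' (by simpa using hFa))
  obtain ⟨ξ, hξ⟩ : ∃ ξ : F.obj X₃ ⟶ F.obj Z, ε - F.map b = F.map g ≫ ξ :=
    Triangle.yoneda_exact₂ _ hFT (ε - F.map b)
    (by rw [Preadditive.comp_sub, ← ha, F.map_comp, sub_self] : F.map f ≫ (ε - F.map b) = 0)
  obtain ⟨x, rfl⟩ := h₃ ξ
  refine ⟨b + g ≫ x, ?_⟩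
  simp [← hξ]

end Triangulated

end CategoryTheory

/-- Closure under extensions of the class `U_Y`, for a Verdier quotient
`Q : C → C/N` of triangulated categories:  `U_Y` consists of the objects `X` such that the
canonical map `Hom_C(X, Y⟦i⟧) → Hom_{C/N}(QX, Q(Y⟦i⟧))` is bijective for `i ≤ 0` and
injective for `i = 1`. -/
theorem stmt6 (C : Type) [Category C] [HasZeroObject C] [HasShift C ℤ] [Preadditive C]
    [∀ n : ℤ, (shiftFunctor C n).Additive] [Pretriangulated C] [IsTriangulated C]
    (D : Type) [Category D] [HasZeroObject D] [HasShift D ℤ] [Preadditive D]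
    [∀ n : ℤ, (shiftFunctor D n).Additive] [Pretriangulated D]
    (N : Triangulated.Subcategory C) [ObjectProperty.IsClosedUnderIsomorphisms N.P]
    (hthick : ∀ X Y : C, N.P (X ⊞ Y) → N.P X)
    (Q : C ⥤ D) [Q.CommShift ℤ] [Q.IsTriangulated] [Q.IsLocalization N.W]
    (Y : C)
    (U : Set C)
    (hU : U = {X : C | (∀ i : ℤ, i ≤ 0 →
        Function.Bijective (fun f : X ⟶ Y⟦i⟧ => Q.map f)) ∧
      Function.Injective (fun f : X ⟶ Y⟦(1 : ℤ)⟧ => Q.map f)})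
    (X₁ E X₂ : C) (f : X₁ ⟶ E) (g : E ⟶ X₂) (h : X₂ ⟶ X₁⟦(1 : ℤ)⟧)
    (hT : Triangle.mk f g h ∈ distTriang C)
    (h₁ : X₁ ∈ U) (h₂ : X₂ ∈ U) :
    E ∈ U := by
  subst hU
  have injective_le_one {X : C} (hX : (∀ i : ℤ, i ≤ 0 →
      Function.Bijective (Q.map (X := X) (Y := Y⟦i⟧))) ∧
      Function.Injective (Q.map (X := X) (Y := Y⟦(1 : ℤ)⟧))) (i : ℤ) (hi : i ≤ 1) :
      Function.Injective (Q.map (X := X) (Y := Y⟦i⟧)) := by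
    rcases hi.lt_or_eq with hi | rfl
    · exact (hX.1 i (by omega)).1
    · exact hX.2
  have injective_at_E (i : ℤ) (hi : i ≤ 1) : Function.Injective (Q.map (X := E) (Y := Y⟦i⟧)) :=
    Q.map_injective_obj₂_of_distTriang _ hT (injective_le_one h₁ i hi)
      (injective_le_one h₂ i hi)
      (Q.map_surjective_of_iso_right ((shiftFunctorAdd' C (i - 1) 1 i (by omega)).app Y).symm
        (Q.map_surjective_shift 1 (h₁.1 (i - 1) (by omega)).2))
  refine ⟨fun i hi => ⟨injective_at_E i (by omega), ?_⟩, injective_at_E 1 le_rfl⟩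
  exact Q.map_surjective_obj₂_of_distTriang _ hT (h₁.1 i hi).2 (h₂.1 i hi).2
    (Q.map_injective_of_iso_right ((shiftFunctorAdd' C i 1 (i + 1) rfl).app Y)
      (injective_le_one h₂ (i + 1) (by omega)))
end
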